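/- In the aligned-preference matching market above (preferences of both sides determined by common values U_{as}, all pairwise distinct), the unique stable matching is obtained greedily: repeatedly select the pair (a,s) with the highest value U_{as} among all pairs where s is unmatched and a has remaining capacity, and match them, until no feasible pair remains. -/

import Mathlib

open Finset

variable {A S : Type*}

def IsMatching [Fintype S] [DecidableEq A] (q : A → ℕ) (μ : S → Option A) : Prop :=
  ∀ a : A, (Finset.univ.filter (fun s => μ s = some a)).card ≤ q a

def Blocks [Fintype S] [DecidableEq A] (q : A → ℕ) (U : A → S → ℝ)
    (μ : S → Option A) (a : A) (s : S) : Prop :=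
  μ s ≠ some a ∧
  (∀ a' : A, μ s = some a' → U a' s < U a s) ∧
  ((Finset.univ.filter (fun s' => μ s' = some a)).card < q a ∨
    ∃ s' : S, μ s' = some a ∧ U a s' < U a s)

def IsStable [Fintype S] [DecidableEq A] (q : A → ℕ) (U : A → S → ℝ)
    (μ : S → Option A) : Prop :=
  IsMatching q μ ∧ ∀ (a : A) (s : S), ¬ Blocks q U μ a s

/-- One greedy step: match the pair `p = (a, s)` if `s` is currently unmatched and
`a` has residual capacity; otherwise leave the matching unchanged. -/
def greedyStep [Fintype S] [DecidableEq A] [DecidableEq S] (q : A → ℕ)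
    (p : A × S) (μ : S → Option A) : S → Option A :=
  if μ p.2 = none ∧ (Finset.univ.filter (fun s' => μ s' = some p.1)).card < q p.1 then
    Function.update μ p.2 (some p.1)
  else μ

/-- The greedy matching obtained by processing the pairs in the list `l` in order,
starting from the empty matching. -/
def greedy [Fintype S] [DecidableEq A] [DecidableEq S] (q : A → ℕ)
    (l : List (A × S)) : S → Option A :=
  l.foldl (fun μ p => greedyStep q p μ) (fun _ => none)

/-
The greedy matching only ever adds assignments, and when it reaches the pair `(a, s)` every
assignment made so far comes from a pair of larger value.

Stability: if `(a, s)` blocked the greedy matching, then at the moment `(a, s)` was processed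
either `s` was already held by an accelerator it values more, or `a` was already full with
startups it values more; both persist to the end, so `(a, s)` cannot block.

Uniqueness: run the greedy algorithm along the sorted list next to a stable matching `μ`. The
greedy state stays inside `μ`, since a pair it adds outside `μ` would block `μ` (everything
`μ` has not yet been matched with is worth less). It also picks up every pair of `μ` when that
pair comes up, since otherwise its accelerator would already be full with startups of `μ`,
leaving no room in `μ` for this one.
-/

def Extends (μ ν : S → Option A) : Prop :=
  ∀ s a, ν s = some a → μ s = some a

theorem Extends.refl (μ : S → Option A) : Extends μ μ := fun _ _ h => h

theorem Extends.trans {μ ν ρ : S → Option A} (h₁ : Extends μ ν) (h₂ : Extends ν ρ) :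
    Extends μ ρ :=
  fun s a h => h₁ s a (h₂ s a h)

section Load

variable [Fintype S] [DecidableEq A]

def load (μ : S → Option A) (a : A) : ℕ :=
  (Finset.univ.filter (fun s => μ s = some a)).card

theorem load_le_load {μ ν : S → Option A} {a : A} (h : ∀ s, ν s = some a → μ s = some a) :
    load ν a ≤ load μ a :=
  Finset.card_le_card fun s hs => by
    simp only [mem_filter, mem_univ, true_and] at hs ⊢
    exact h s hs

theorem exists_of_load_lt_load {μ ν : S → Option A} {a : A} (hlt : load ν a < load μ a) :
    ∃ s, μ s = some a ∧ ν s ≠ some a := by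
  by_contra! h
  exact (load_le_load h).not_gt hlt

theorem Extends.eq_some_of_load_le {μ ν : S → Option A} (h : Extends μ ν) {q : A → ℕ} {a : A}
    (hμ : load μ a ≤ q a) (hν : q a ≤ load ν a) {s : S} (hs : μ s = some a) :
    ν s = some a := by
  have hsub : univ.filter (fun s => ν s = some a) ⊆ univ.filter (fun s => μ s = some a) :=
    fun s hs => by
      simp only [mem_filter, mem_univ, true_and] at hs ⊢
      exact h s a hs
  have hmem : s ∈ univ.filter (fun s => μ s = some a) := by simpa using hs
  rw [← Finset.eq_of_subset_of_card_le hsub (hμ.trans hν)] at hmem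
  simpa using hmem

end Load

section Greedy

variable [Fintype S] [DecidableEq A] [DecidableEq S]

theorem load_update_self_le (μ : S → Option A) (s₀ : S) (a : A) :
    load (Function.update μ s₀ (some a)) a ≤ load μ a + 1 := by
  refine (Finset.card_le_card fun s hs => ?_).trans (Finset.card_insert_le s₀ _)
  simp only [mem_filter, mem_univ, true_and, mem_insert] at hs ⊢
  rcases eq_or_ne s s₀ with rfl | hs₀
  · exact Or.inl rfl
  · exact Or.inr (by rwa [Function.update_of_ne hs₀] at hs)

theorem load_update_of_ne (μ : S → Option A) (s₀ : S) {a₀ a : A} (ha : a ≠ a₀) :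
    load (Function.update μ s₀ (some a₀)) a ≤ load μ a := by
  refine load_le_load fun s hs => ?_
  rcases eq_or_ne s s₀ with rfl | hs₀
  · rw [Function.update_self, Option.some.injEq] at hs
    exact absurd hs.symm ha
  · rwa [Function.update_of_ne hs₀] at hs

def greedyFrom (q : A → ℕ) (l : List (A × S)) (ν : S → Option A) : S → Option A :=
  l.foldl (fun μ p => greedyStep q p μ) ν

theorem greedyStep_extends (q : A → ℕ) (p : A × S) (ν : S → Option A) :
    Extends (greedyStep q p ν) ν := by
  intro s a h
  unfold greedyStep
  split_ifs with hc
  · rw [Function.update_of_ne]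
    · exact h
    · rintro rfl
      simp [hc.1] at h
  · exact h

theorem greedyFrom_extends (q : A → ℕ) (l : List (A × S)) (ν : S → Option A) :
    Extends (greedyFrom q l ν) ν := by
  induction l generalizing ν with
  | nil => exact Extends.refl ν
  | cons p l ih => exact (ih _).trans (greedyStep_extends q p ν)

theorem greedyStep_apply_self {q : A → ℕ} {a : A} {s : S} {ν : S → Option A}
    (hfree : ν s = none) (hcap : load ν a < q a) : greedyStep q (a, s) ν s = some a := by
  rw [greedyStep, if_pos ⟨hfree, hcap⟩, Function.update_self]

theorem greedyStep_of_not_free {q : A → ℕ} {a : A} {s : S} {ν : S → Option A}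
    (h : ¬(ν s = none ∧ load ν a < q a)) : greedyStep q (a, s) ν = ν :=
  if_neg h

theorem eq_some_of_greedyStep_eq_some {q : A → ℕ} {a₀ a : A} {s₀ s : S} {ν : S → Option A}
    (h : greedyStep q (a₀, s₀) ν s = some a) :
    ν s = some a ∨ (a, s) = (a₀, s₀) ∧ ν s₀ = none ∧ load ν a₀ < q a₀ := by
  unfold greedyStep at h
  split_ifs at h with hc
  · rcases eq_or_ne s s₀ with rfl | hs
    · rw [Function.update_self, Option.some.injEq] at h
      exact Or.inr ⟨by rw [← h], hc⟩
    · exact Or.inl (by rwa [Function.update_of_ne hs] at h)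
  · exact Or.inl h

theorem mem_of_greedyFrom_eq_some {q : A → ℕ} {l : List (A × S)} {ν : S → Option A} {s : S}
    {a : A} (h : greedyFrom q l ν s = some a) : ν s = some a ∨ (a, s) ∈ l := by
  induction l generalizing ν with
  | nil => exact Or.inl h
  | cons p l ih =>
    rcases ih h with h | h
    · rcases eq_some_of_greedyStep_eq_some h with h | ⟨hp, -⟩
      · exact Or.inl h
      · exact Or.inr (hp ▸ List.mem_cons_self)
    · exact Or.inr (List.mem_cons_of_mem _ h)

theorem IsMatching.greedyStep {q : A → ℕ} {μ : S → Option A} (h : IsMatching q μ) (p : A × S) :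
    IsMatching q (greedyStep q p μ) := by
  obtain ⟨a₀, s₀⟩ := p
  intro a
  unfold _root_.greedyStep
  split_ifs with hc
  · rcases eq_or_ne a a₀ with rfl | ha
    · exact (load_update_self_le μ s₀ a).trans hc.2
    · exact (load_update_of_ne μ s₀ ha).trans (h a)
  · exact h a

theorem IsMatching.greedyFrom {q : A → ℕ} {μ : S → Option A} (h : IsMatching q μ)
    (l : List (A × S)) : IsMatching q (greedyFrom q l μ) := by
  induction l generalizing μ with
  | nil => exact h
  | cons p l ih => exact ih (h.greedyStep p)

theorem isMatching_greedy (q : A → ℕ) (l : List (A × S)) : IsMatching q (greedy q l) :=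
  IsMatching.greedyFrom (fun a => by simp) l

end Greedy

section Stable

variable [Fintype S] [DecidableEq A] [DecidableEq S]

theorem greedy_not_blocks {q : A → ℕ} {U : A → S → ℝ} {l : List (A × S)}
    (hsorted : l.Pairwise (fun p p' => U p'.1 p'.2 < U p.1 p.2)) {a : A} {s : S}
    (hmem : (a, s) ∈ l) : ¬ Blocks q U (greedy q l) a s := by
  rintro ⟨hne, hpref, hcap⟩
  obtain ⟨l₁, l₂, rfl⟩ := List.append_of_mem hmem
  set ν := greedyFrom q l₁ (fun _ => none)
  have hgreedy : greedy q (l₁ ++ (a, s) :: l₂) = greedyFrom q l₂ (greedyStep q (a, s) ν) :=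
    List.foldl_append ..
  have hext : Extends (greedy q (l₁ ++ (a, s) :: l₂)) ν :=
    hgreedy ▸ (greedyFrom_extends q l₂ _).trans (greedyStep_extends q (a, s) ν)
  have hbetter : ∀ a' s', ν s' = some a' → U a s < U a' s' := fun a' s' h =>
    (mem_of_greedyFrom_eq_some h).elim (fun h => nomatch h) fun hm =>
      (List.pairwise_append.1 hsorted).2.2 _ hm _ List.mem_cons_self
  by_cases hfree : ν s = none ∧ load ν a < q a
  · exact hne (hgreedy ▸ greedyFrom_extends q l₂ _ s a (greedyStep_apply_self hfree.1 hfree.2))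
  rcases hν : ν s with _ | a'
  · have hfull : q a ≤ load ν a := not_lt.1 fun h => hfree ⟨hν, h⟩
    rcases hcap with hlt | ⟨s', hs', hlt⟩
    · exact (hfull.trans (load_le_load fun s' => hext s' a)).not_gt hlt
    · exact (hbetter a s' (hext.eq_some_of_load_le (isMatching_greedy q _ a) hfull hs')).asymm hlt
  · exact (hbetter a' s hν).asymm (hpref a' (hext s a' hν))

theorem IsStable.extends_greedyStep {q : A → ℕ} {U : A → S → ℝ} {μ ν : S → Option A}
    {a₀ : A} {s₀ : S} (hμ : IsStable q U μ) (hext : Extends μ ν)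
    (hrest : ∀ s a, μ s = some a → ν s = some a ∨ (a, s) = (a₀, s₀) ∨ U a s < U a₀ s₀) :
    Extends μ (greedyStep q (a₀, s₀) ν) := by
  intro s a h
  rcases eq_some_of_greedyStep_eq_some h with h | ⟨hp, hfree, hcap⟩
  · exact hext s a h
  simp only [Prod.mk.injEq] at hp
  obtain ⟨rfl, rfl⟩ := hp
  by_contra hne
  refine hμ.2 a s ⟨hne, fun a' ha' => ?_, ?_⟩
  · rcases hrest s a' ha' with h' | h' | h'
    · simp [hfree] at h'
    · exact absurd (ha'.trans (congrArg (some ∘ Prod.fst) h')) hne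
    · exact h'
  · by_cases hμcap : load μ a < q a
    · exact Or.inl hμcap
    obtain ⟨s', hs', hνs'⟩ := exists_of_load_lt_load (hcap.trans_le (not_lt.1 hμcap))
    rcases hrest s' a hs' with h' | h' | h'
    · exact absurd h' hνs'
    · obtain rfl : s' = s := congrArg Prod.snd h'
      exact absurd hs' hne
    · exact Or.inr ⟨s', hs', h'⟩

theorem greedyStep_apply_of_eq_some {q : A → ℕ} {μ ν : S → Option A} {a : A} {s : S}
    (hμ : IsMatching q μ) (hext : Extends μ ν) (h : μ s = some a) :
    greedyStep q (a, s) ν s = some a := by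
  by_cases hfree : ν s = none ∧ load ν a < q a
  · exact greedyStep_apply_self hfree.1 hfree.2
  rw [greedyStep_of_not_free hfree]
  rcases hν : ν s with _ | a'
  · have hfull : q a ≤ load ν a := not_lt.1 fun hlt => hfree ⟨hν, hlt⟩
    simpa [hν] using hext.eq_some_of_load_le (hμ a) hfull h
  · exact (hext s a' hν).symm.trans h

theorem IsStable.eq_greedyFrom {q : A → ℕ} {U : A → S → ℝ} {μ : S → Option A}
    (hμ : IsStable q U μ) {l : List (A × S)} {ν : S → Option A}
    (hsorted : l.Pairwise (fun p p' => U p'.1 p'.2 < U p.1 p.2)) (hext : Extends μ ν)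
    (hcov : ∀ s a, μ s = some a → ν s = some a ∨ (a, s) ∈ l) : μ = greedyFrom q l ν := by
  induction l generalizing ν with
  | nil =>
    change μ = ν
    funext s
    rcases hs : μ s with _ | a
    · rcases hν : ν s with _ | a
      · rfl
      · simpa [hs] using hext s a hν
    · exact ((hcov s a hs).resolve_right List.not_mem_nil).symm
  | cons p l ih =>
    obtain ⟨a₀, s₀⟩ := p
    obtain ⟨hhead, htail⟩ := List.pairwise_cons.1 hsorted
    refine ih htail (hμ.extends_greedyStep hext fun s a h => ?_) fun s a h => ?_
    · rcases hcov s a h with h' | h'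
      · exact Or.inl h'
      rcases List.mem_cons.1 h' with h' | h'
      · exact Or.inr (Or.inl h')
      · exact Or.inr (Or.inr (hhead _ h'))
    · rcases hcov s a h with h' | h'
      · exact Or.inl (greedyStep_extends q _ ν s a h')
      rcases List.mem_cons.1 h' with h' | h'
      · simp only [Prod.mk.injEq] at h'
        obtain ⟨rfl, rfl⟩ := h'
        exact Or.inl (greedyStep_apply_of_eq_some hμ.1 hext h)
      · exact Or.inr h'

end Stable

theorem stmt_4_general [Fintype S] [DecidableEq A] [DecidableEq S]
    (q : A → ℕ) (U : A → S → ℝ) (l : List (A × S))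
    (hl_all : ∀ p : A × S, p ∈ l)
    (hl_sorted : l.Pairwise (fun p p' => U p'.1 p'.2 < U p.1 p.2)) :
    IsStable q U (greedy q l) ∧ ∀ μ : S → Option A, IsStable q U μ → μ = greedy q l :=
  ⟨⟨isMatching_greedy q l, fun a s => greedy_not_blocks hl_sorted (hl_all (a, s))⟩,
    fun _ hμ => hμ.eq_greedyFrom hl_sorted (fun _ _ h => nomatch h)
      fun s a _ => Or.inr (hl_all (a, s))⟩

/-- In the aligned-preference matching market (common pairwise
distinct positive values `U_{as}`), the unique stable matching is produced by the
greedy algorithm that processes all pairs in decreasing order of `U_{as}`, matching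
`(a, s)` whenever `s` is unmatched and `a` has residual capacity: the greedy matching
is stable, and every stable matching equals it. -/
theorem stmt_4 [Fintype A] [Fintype S] [DecidableEq A] [DecidableEq S]
    (q : A → ℕ) (U : A → S → ℝ) (l : List (A × S))
    (hq : ∀ a, 1 ≤ q a)
    (hdistinct : ∀ a s a' s', U a s = U a' s' → (a, s) = (a', s'))
    (hpos : ∀ a s, 0 < U a s)
    (hl_all : ∀ p : A × S, p ∈ l)
    (hl_sorted : l.Pairwise (fun p p' => U p'.1 p'.2 < U p.1 p.2)) :
    IsStable q U (greedy q l) ∧ ∀ μ : S → Option A, IsStable q U μ → μ = greedy q l :=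
  stmt_4_general q U l hl_all hl_sorted
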